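/- arXiv:2002.09312 — 2 statements merged into one kernel-verified Lean document; each statement's English description precedes it below -/
import Mathlib

section
/- Let ρ be a finite positive Borel measure on [0,∞). Then for every Schwartz function f on ℝ⁴, lim_{λ→0⁺} ∫_{[0,∞)} (∫_{ℝ³} f̂(√(|p|²+λ²m²), p)/√(|p|²+λ²m²) dp) dρ(m²) = ρ([0,∞)) · ∫_{ℝ³} f̂(|p|, p)/|p| dp, and this limit is finite. -/
open MeasureTheory Filter Topology SchwartzMap
open scoped FourierTransform

/-- The point `(p₀, p) ∈ ℝ⁴` built from a time component `p0 ∈ ℝ` and a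
space momentum `p ∈ ℝ³`. -/
noncomputable def timeSpace (p0 : ℝ) (p : EuclideanSpace ℝ (Fin 3)) :
    EuclideanSpace ℝ (Fin 4) :=
  (EuclideanSpace.equiv (Fin 4) ℝ).symm (Fin.cons p0 (EuclideanSpace.equiv (Fin 3) ℝ p))

/-- The inner Källén–Lehmann momentum integral
`∫_{ℝ³} f̂(√(|p|²+m²), p)/√(|p|²+m²) dp` at squared mass `m2 = m²`,
where `f̂ = 𝓕 f` is the Fourier transform of `f`. -/
noncomputable def KLinner (f : EuclideanSpace ℝ (Fin 4) → ℂ) (m2 : ℝ) : ℂ :=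
  ∫ p : EuclideanSpace ℝ (Fin 3),
    𝓕 f (timeSpace (Real.sqrt (‖p‖ ^ 2 + m2)) p) / (Real.sqrt (‖p‖ ^ 2 + m2) : ℂ)

/-- The Källén–Lehmann two-point functional
`W_ρ(f) = ∫_{[0,∞)} (∫_{ℝ³} f̂(√(|p|²+m²), p)/√(|p|²+m²) dp) dρ(m²)`
associated with a spectral measure `ρ` on `[0,∞)`. -/
noncomputable def KL (ρ : Measure ℝ) (f : EuclideanSpace ℝ (Fin 4) → ℂ) : ℂ :=
  ∫ m2 in Set.Ici (0 : ℝ), KLinner f m2 ∂ρ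

/-- The scaled Källén–Lehmann functional `W_{ρ,λ}(f) = λ⁻⁴ W_ρ(f(λ⁻¹ ·))`. -/
noncomputable def KLscaled (ρ : Measure ℝ) (lam : ℝ) (f : EuclideanSpace ℝ (Fin 4) → ℂ) : ℂ :=
  (lam ^ (4 : ℕ) : ℝ)⁻¹ * KL ρ (fun x => f (lam⁻¹ • x))

/-! Since `𝓕 f` is a Schwartz function, the mass-shell integrand at any `m² ≥ 0` is dominated,
uniformly in `m²`, by `C ‖p‖⁻¹ (1 + ‖p‖)⁻⁴`, which is integrable on `ℝ³` because `‖p‖⁻¹` is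
integrable near the origin in dimension three. Dominated convergence therefore makes
`m² ↦ KLinner f m²` continuous and bounded on `[0, ∞)`, and a second application, with a constant
bound against the finite measure `ρ`, lets `λ → 0` pass under `∫ KLinner f (λ² m²) dρ(m²)`. -/

open Set

@[fun_prop]
lemma Continuous.timeSpace {X : Type*} [TopologicalSpace X] {a : X → ℝ}
    {b : X → EuclideanSpace ℝ (Fin 3)} (ha : Continuous a) (hb : Continuous b) :
    Continuous fun x => timeSpace (a x) (b x) := by
  unfold _root_.timeSpace
  fun_prop

lemma norm_le_norm_timeSpace (p0 : ℝ) (p : EuclideanSpace ℝ (Fin 3)) :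
    ‖p‖ ≤ ‖timeSpace p0 p‖ := by
  simp only [EuclideanSpace.norm_eq]
  gcongr
  simp [timeSpace, Fin.sum_univ_succ]
  positivity

theorem SchwartzMap.exists_norm_le_mul_one_add_norm_rpow_neg {E F : Type*}
    [NormedAddCommGroup E] [NormedSpace ℝ E] [NormedAddCommGroup F] [NormedSpace ℝ F]
    (f : 𝓢(E, F)) (k : ℕ) : ∃ C, ∀ x, ‖f x‖ ≤ C * (1 + ‖x‖) ^ (-(k : ℝ)) := by
  refine ⟨2 ^ k * (Finset.Iic (k, 0)).sup (fun m => SchwartzMap.seminorm ℝ m.1 m.2) f,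
    fun x => ?_⟩
  rw [Real.rpow_neg (by positivity), Real.rpow_natCast, ← div_eq_mul_inv,
    le_div_iff₀ (by positivity), mul_comm]
  simpa using one_add_le_sup_seminorm_apply (m := (k, 0)) le_rfl le_rfl f x

theorem integrable_inv_norm_mul_one_add_norm_rpow_neg {E : Type*} [NormedAddCommGroup E]
    [NormedSpace ℝ E] [FiniteDimensional ℝ E] [MeasurableSpace E] [BorelSpace E]
    {μ : Measure E} [μ.IsAddHaarMeasure] (hd : 1 < Module.finrank ℝ E) {r : ℝ}
    (hr : Module.finrank ℝ E < r) :
    Integrable (fun x : E => ‖x‖⁻¹ * (1 + ‖x‖) ^ (-r)) μ := by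
  have hmeas : AEStronglyMeasurable (fun x : E => ‖x‖⁻¹ * (1 + ‖x‖) ^ (-r)) μ := by
    fun_prop
  have hr0 : 0 ≤ r := by linarith [(Nat.cast_nonneg _ : (0 : ℝ) ≤ Module.finrank ℝ E)]
  rw [← integrableOn_univ, ← union_compl_self (Metric.ball (0 : E) 1)]
  refine IntegrableOn.union ?_ ?_
  · refine integrableOn_ball_of_norm_le_rpow hd.le (C := 1) (α := 1) (by exact_mod_cast hd)
      (Eventually.of_forall fun x => ?_) hmeas
    have : (1 + ‖x‖) ^ (-r) ≤ 1 := Real.rpow_le_one_of_one_le_of_nonpos (by simp) (by linarith)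
    rw [Real.norm_of_nonneg (by positivity), Real.rpow_neg_one, one_mul]
    exact mul_le_of_le_one_right (by positivity) this
  · refine (integrable_one_add_norm hr).integrableOn.mono' hmeas.restrict ?_
    filter_upwards [ae_restrict_mem measurableSet_ball.compl] with x hx
    have hx1 : 1 ≤ ‖x‖ := by simpa using hx
    rw [Real.norm_of_nonneg (by positivity)]
    exact mul_le_of_le_one_left (by positivity) (inv_le_one_of_one_le₀ hx1)

lemma norm_div_sqrt_timeSpace_le {g : EuclideanSpace ℝ (Fin 4) → ℂ} {C r : ℝ} (hr : 0 ≤ r)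
    (hg : ∀ x, ‖g x‖ ≤ C * (1 + ‖x‖) ^ (-r)) {m2 : ℝ} (hm2 : 0 ≤ m2)
    {p : EuclideanSpace ℝ (Fin 3)} (hp : p ≠ 0) :
    ‖g (timeSpace √(‖p‖ ^ 2 + m2) p) / (√(‖p‖ ^ 2 + m2) : ℂ)‖ ≤
      C * (‖p‖⁻¹ * (1 + ‖p‖) ^ (-r)) := by
  set x := timeSpace √(‖p‖ ^ 2 + m2) p
  have hC : 0 ≤ C := nonneg_of_mul_nonneg_left ((norm_nonneg _).trans (hg 0)) (by positivity)
  have hp_le : ‖p‖ ≤ √(‖p‖ ^ 2 + m2) := Real.le_sqrt_of_sq_le (by linarith)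
  have hgx : ‖g x‖ ≤ C * (1 + ‖p‖) ^ (-r) := (hg x).trans <|
    mul_le_mul_of_nonneg_left (Real.rpow_le_rpow_of_nonpos (by positivity)
      (by linarith [norm_le_norm_timeSpace √(‖p‖ ^ 2 + m2) p]) (by linarith)) hC
  rw [norm_div, Complex.norm_real, Real.norm_of_nonneg (Real.sqrt_nonneg _)]
  calc ‖g x‖ / √(‖p‖ ^ 2 + m2) ≤ C * (1 + ‖p‖) ^ (-r) / ‖p‖ :=
        div_le_div₀ (by positivity) hgx (norm_pos_iff.2 hp) hp_le
    _ = C * (‖p‖⁻¹ * (1 + ‖p‖) ^ (-r)) := by ring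

lemma exists_integrable_bound_KLinner_integrand (f : 𝓢(EuclideanSpace ℝ (Fin 4), ℂ)) :
    ∃ D : EuclideanSpace ℝ (Fin 3) → ℝ, Integrable D ∧ ∀ m2 ∈ Ici (0 : ℝ), ∀ᵐ p,
      ‖𝓕 (⇑f) (timeSpace √(‖p‖ ^ 2 + m2) p) / (√(‖p‖ ^ 2 + m2) : ℂ)‖ ≤ D p := by
  obtain ⟨C, hC⟩ := (𝓕 f).exists_norm_le_mul_one_add_norm_rpow_neg 4
  refine ⟨fun p => C * (‖p‖⁻¹ * (1 + ‖p‖) ^ (-((4 : ℕ) : ℝ))),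
    (integrable_inv_norm_mul_one_add_norm_rpow_neg (by simp) (by norm_num)).const_mul C,
    fun m2 hm2 => ?_⟩
  filter_upwards [Measure.ae_ne volume 0] with p hp
  exact norm_div_sqrt_timeSpace_le (by positivity) hC hm2 hp

lemma continuousOn_KLinner (f : 𝓢(EuclideanSpace ℝ (Fin 4), ℂ)) :
    ContinuousOn (KLinner f) (Ici 0) := by
  obtain ⟨D, hD, hbound⟩ := exists_integrable_bound_KLinner_integrand f
  have hf : Continuous (𝓕 (⇑f)) := (𝓕 f).continuous
  refine continuousOn_of_dominated (fun m2 _ => ?_) hbound hD ?_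
  · exact Measurable.aestronglyMeasurable (by fun_prop)
  · filter_upwards [Measure.ae_ne volume 0] with p hp
    refine (Continuous.continuousOn (by fun_prop)).div (Continuous.continuousOn (by fun_prop))
      fun m2 (hm2 : 0 ≤ m2) => ?_
    have : 0 < ‖p‖ := norm_pos_iff.2 hp
    exact Complex.ofReal_ne_zero.2 (Real.sqrt_ne_zero'.2 (by positivity))

lemma exists_norm_KLinner_le (f : 𝓢(EuclideanSpace ℝ (Fin 4), ℂ)) :
    ∃ C, ∀ m2 ∈ Ici (0 : ℝ), ‖KLinner f m2‖ ≤ C := by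
  obtain ⟨D, hD, hbound⟩ := exists_integrable_bound_KLinner_integrand f
  exact ⟨∫ p, D p, fun m2 hm2 => norm_integral_le_of_norm_le hD (hbound m2 hm2)⟩

lemma tendsto_setIntegral_Ici_comp_mul {ι E : Type*} [NormedAddCommGroup E] [NormedSpace ℝ E]
    [CompleteSpace E] {l : Filter ι} [l.IsCountablyGenerated] {ρ : Measure ℝ} [IsFiniteMeasure ρ]
    {h : ℝ → E} {C : ℝ} (hh : ContinuousOn h (Ici 0)) (hC : ∀ x ∈ Ici (0 : ℝ), ‖h x‖ ≤ C)
    {c : ι → ℝ} (hc : Tendsto c l (𝓝 0)) (hc0 : ∀ i, 0 ≤ c i) :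
    Tendsto (fun i => ∫ m in Ici 0, h (c i * m) ∂ρ) l (𝓝 (ρ.real (Ici 0) • h 0)) := by
  rw [← setIntegral_const]
  refine tendsto_integral_filter_of_dominated_convergence (fun _ => C)
    (Eventually.of_forall fun i => ?_) (Eventually.of_forall fun i => ?_) (integrable_const C) ?_
  · refine (hh.comp (by fun_prop) fun m (hm : 0 ≤ m) => ?_).aestronglyMeasurable measurableSet_Ici
    exact mul_nonneg (hc0 i) hm
  · filter_upwards [ae_restrict_mem measurableSet_Ici] with m (hm : 0 ≤ m)
    exact hC _ (mul_nonneg (hc0 i) hm)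
  · filter_upwards [ae_restrict_mem measurableSet_Ici] with m (hm : 0 ≤ m)
    refine (hh 0 self_mem_Ici).tendsto.comp (tendsto_nhdsWithin_iff.2 ⟨?_, ?_⟩)
    · simpa using hc.mul_const m
    · exact Eventually.of_forall fun i => mul_nonneg (hc0 i) hm

/-- For a finite positive Borel measure `ρ` on `[0,∞)` and every Schwartz `f`
on ℝ⁴, as `λ → 0⁺` the bracketed term of the scaled Källén–Lehmann functional converges to
`ρ([0,∞)) · ∫_{ℝ³} f̂(|p|, p)/|p| dp` (a finite limit). -/
theorem kl_bracket_limit (ρ : Measure ℝ) [IsFiniteMeasure ρ]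
    (f : 𝓢(EuclideanSpace ℝ (Fin 4), ℂ)) :
    Tendsto (fun lam : ℝ =>
        ∫ m2 in Set.Ici (0 : ℝ),
          (∫ p : EuclideanSpace ℝ (Fin 3),
            𝓕 (⇑f) (timeSpace (Real.sqrt (‖p‖ ^ 2 + lam ^ 2 * m2)) p) /
              (Real.sqrt (‖p‖ ^ 2 + lam ^ 2 * m2) : ℂ)) ∂ρ)
      (𝓝[>] (0 : ℝ))
      (𝓝 (((ρ (Set.Ici 0)).toReal : ℂ) *
        ∫ p : EuclideanSpace ℝ (Fin 3), 𝓕 (⇑f) (timeSpace ‖p‖ p) / (‖p‖ : ℂ))) := by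
  obtain ⟨C, hC⟩ := exists_norm_KLinner_le f
  have hsq : Tendsto (fun lam : ℝ => lam ^ 2) (𝓝[>] 0) (𝓝 0) :=
    ((continuous_pow 2).tendsto' 0 0 (by simp)).mono_left nhdsWithin_le_nhds
  have := tendsto_setIntegral_Ici_comp_mul (ρ := ρ) (continuousOn_KLinner f) hC hsq sq_nonneg
  simpa [KLinner, Measure.real, Complex.real_smul, Real.sqrt_sq] using this
end

section
/- (Theorem 3.2, main result.) Let ρ be a finite positive Borel measure on [0,∞), i.e. ∫_{[0,∞)} dρ(m²) < ∞, and let W_ρ be its Källén–Lehmann functional with scaled functionals W_{ρ,λ}(f) = λ^{-4} W_ρ(f(λ^{-1}·)). Then for every real ω > 2 and every Schwartz function f on ℝ⁴, lim_{λ→0⁺} λ^ω W_{ρ,λ}(f) = 0. Consequently the Steinmann scaling degree of W_ρ is at most 2, the scaling degree of a free theory, so the singularity hypothesis sd(W_ρ) > 2 fails. -/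
/-! Dilations act on the Fourier side as `𝓕 (f (λ⁻¹ ·)) ξ = λ⁴ 𝓕 f (λ ξ)`, and `𝓕 f` decays like
`(1 + ‖ξ‖)⁻⁴`. Since the on-shell point `(√(‖p‖² + m²), p)` has norm at least `‖p‖` and energy
at least `‖p‖`, the inner momentum integral of `f (λ⁻¹ ·)` is bounded, uniformly in `m² ≥ 0`, by
`λ⁴ C ∫ ‖p‖⁻¹ (1 + λ‖p‖)⁻⁴ dp = λ² C ∫ ‖q‖⁻¹ (1 + ‖q‖)⁻⁴ dq`, and the last integral is finite
in `ℝ³`. Integrating against the finite measure `ρ` gives `W_{ρ,λ}(f) = O(λ⁻²)`, so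
`λ^ω W_{ρ,λ}(f) → 0` for every `ω > 2`. -/

open MeasureTheory Filter Topology SchwartzMap
open scoped FourierTransform

open Set
open scoped RealInnerProductSpace

lemma SchwartzMap.exists_norm_le_mul_inv_one_add_norm_pow {E F : Type*} [NormedAddCommGroup E]
    [NormedSpace ℝ E] [NormedAddCommGroup F] [NormedSpace ℝ F] (f : 𝓢(E, F)) (k : ℕ) :
    ∃ C, 0 ≤ C ∧ ∀ x, ‖f x‖ ≤ C * ((1 + ‖x‖) ^ k)⁻¹ := by
  refine ⟨2 ^ k * (Finset.Iic (k, 0)).sup (fun m => SchwartzMap.seminorm ℝ m.1 m.2) f,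
    by positivity, fun x => ?_⟩
  rw [← div_eq_mul_inv, le_div_iff₀ (by positivity), mul_comm]
  simpa using one_add_le_sup_seminorm_apply (𝕜 := ℝ) (m := (k, 0)) le_rfl le_rfl f x

/-- In polar coordinates the integrand becomes `r ^ (n - 2) (1 + r) ^ (-k)`, which is integrable
near `0` since `n ≥ 2` and at infinity since `k - n + 2 > 1`. -/
lemma integrable_inv_norm_mul_inv_one_add_norm_pow {E : Type*} [NormedAddCommGroup E]
    [NormedSpace ℝ E] [FiniteDimensional ℝ E] [MeasurableSpace E] [BorelSpace E]
    (μ : Measure E) [μ.IsAddHaarMeasure] {k : ℕ} (hE : 2 ≤ Module.finrank ℝ E)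
    (hk : Module.finrank ℝ E < k + 1) :
    Integrable (fun x : E => ‖x‖⁻¹ * ((1 + ‖x‖) ^ k)⁻¹) μ := by
  set n := Module.finrank ℝ E
  have : Nontrivial E := Module.nontrivial_of_finrank_pos (R := ℝ) (by omega)
  rw [integrable_fun_norm_addHaar μ (f := fun y => y⁻¹ * ((1 + y) ^ k)⁻¹)]
  have hr : (Module.finrank ℝ ℝ : ℝ) < k + 2 - n := by
    have : (n : ℝ) < k + 1 := by exact_mod_cast hk
    rw [Module.finrank_self]; push_cast; linarith
  refine (integrable_one_add_norm hr).integrableOn.mono' (by fun_prop)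
    ((ae_restrict_iff' measurableSet_Ioi).2 (.of_forall fun y (hy : 0 < y) => ?_))
  have hy1 : 0 < 1 + y := by linarith
  rw [smul_eq_mul, Real.norm_eq_abs, Real.norm_eq_abs, abs_of_pos hy,
    abs_of_nonneg (by positivity),
    show -((k : ℝ) + 2 - n) = ((n - 2 : ℕ) : ℝ) - k by push_cast [hE]; ring,
    Real.rpow_sub hy1, Real.rpow_natCast, Real.rpow_natCast, div_eq_mul_inv,
    show n - 1 = (n - 2) + 1 by omega, pow_succ, mul_assoc, mul_inv_cancel_left₀ hy.ne']
  gcongr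
  linarith

lemma Real.fourier_comp_inv_smul {V : Type*} [NormedAddCommGroup V] [InnerProductSpace ℝ V]
    [FiniteDimensional ℝ V] [MeasurableSpace V] [BorelSpace V]
    (f : V → ℂ) {lam : ℝ} (hlam : 0 < lam) (ξ : V) :
    𝓕 (fun x => f (lam⁻¹ • x)) ξ = (lam ^ Module.finrank ℝ V : ℝ) • 𝓕 f (lam • ξ) := by
  have hphase : ∀ v : V, ⟪v, ξ⟫ = ⟪lam⁻¹ • v, lam • ξ⟫ := fun v => by
    rw [real_inner_smul_right, real_inner_smul_left, mul_inv_cancel_left₀ hlam.ne']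
  simp_rw [Real.fourier_eq, hphase]
  exact Measure.integral_comp_inv_smul_of_nonneg volume
    (fun w : V => 𝐞 (-⟪w, lam • ξ⟫) • f w) hlam.le

lemma Real.tendsto_rpow_mul_nhdsGT_zero {p : ℝ} (hp : 0 < p) (K : ℝ) :
    Tendsto (fun x : ℝ => x ^ p * K) (𝓝[>] 0) (𝓝 0) := by
  simpa using ((tendsto_nhdsWithin_of_tendsto_nhds tendsto_id).rpow_const_nhds_zero hp).mul_const K

/-- `0 ≤ a` is needed because `sInf S = 0` for `S` unbounded below. -/
lemma Real.sInf_le_of_Ioi_subset {S : Set ℝ} {a : ℝ} (ha : 0 ≤ a) (h : Ioi a ⊆ S) :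
    sInf S ≤ a := by
  by_cases hS : BddBelow S
  · exact le_of_forall_pos_le_add fun ε hε => csInf_le hS (h (by simpa using hε))
  · rwa [Real.sInf_of_not_bddBelow hS]

local notation "E3" => EuclideanSpace ℝ (Fin 3)
local notation "E4" => EuclideanSpace ℝ (Fin 4)

lemma norm_timeSpace_sq (t : ℝ) (p : E3) : ‖timeSpace t p‖ ^ 2 = t ^ 2 + ‖p‖ ^ 2 := by
  simp [EuclideanSpace.norm_sq_eq, Fin.sum_univ_succ, timeSpace]

lemma norm_le_norm_timeSpace_s6 (t : ℝ) (p : E3) : ‖p‖ ≤ ‖timeSpace t p‖ :=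
  (pow_le_pow_iff_left₀ (norm_nonneg _) (norm_nonneg _) two_ne_zero).1
    (by rw [norm_timeSpace_sq]; nlinarith [sq_nonneg t])

lemma norm_KLinner_integrand_comp_inv_smul_le {f : E4 → ℂ} {C : ℝ} (hC : 0 ≤ C)
    (hf : ∀ ξ, ‖𝓕 f ξ‖ ≤ C * ((1 + ‖ξ‖) ^ 4)⁻¹) {lam : ℝ} (hlam : 0 < lam) {m2 : ℝ}
    (hm2 : 0 ≤ m2) {p : E3} (hp : p ≠ 0) :
    ‖𝓕 (fun x => f (lam⁻¹ • x)) (timeSpace √(‖p‖ ^ 2 + m2) p) / (√(‖p‖ ^ 2 + m2) : ℂ)‖ ≤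
      lam ^ 5 * (C * (‖lam • p‖⁻¹ * ((1 + ‖lam • p‖) ^ 4)⁻¹)) := by
  set s := √(‖p‖ ^ 2 + m2)
  have hps : ‖p‖ ≤ s := Real.le_sqrt_of_sq_le (by linarith)
  have hp0 : 0 < ‖p‖ := norm_pos_iff.2 hp
  have hlamX : lam * ‖p‖ ≤ ‖lam • timeSpace s p‖ := by
    rw [norm_smul, Real.norm_of_nonneg hlam.le]
    gcongr
    exact norm_le_norm_timeSpace_s6 s p
  rw [norm_div, Real.fourier_comp_inv_smul f hlam, finrank_euclideanSpace_fin, norm_smul,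
    Complex.norm_real, Real.norm_of_nonneg (by positivity),
    Real.norm_of_nonneg (hp0.trans_le hps).le, norm_smul, Real.norm_of_nonneg hlam.le]
  calc lam ^ 4 * ‖𝓕 f (lam • timeSpace s p)‖ / s
      ≤ lam ^ 4 * (C * ((1 + lam * ‖p‖) ^ 4)⁻¹) / ‖p‖ := by
        gcongr
        exact (hf _).trans (by gcongr)
    _ = lam ^ 5 * (C * ((lam * ‖p‖)⁻¹ * ((1 + lam * ‖p‖) ^ 4)⁻¹)) := by
        field_simp

lemma norm_KLinner_comp_inv_smul_le {f : E4 → ℂ} {C : ℝ} (hC : 0 ≤ C)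
    (hf : ∀ ξ, ‖𝓕 f ξ‖ ≤ C * ((1 + ‖ξ‖) ^ 4)⁻¹) {lam : ℝ} (hlam : 0 < lam) {m2 : ℝ}
    (hm2 : 0 ≤ m2) :
    ‖KLinner (fun x => f (lam⁻¹ • x)) m2‖ ≤
      lam ^ 2 * (C * ∫ q : E3, ‖q‖⁻¹ * ((1 + ‖q‖) ^ 4)⁻¹) := by
  have hB := integrable_inv_norm_mul_inv_one_add_norm_pow (volume : Measure E3) (k := 4)
    (by simp) (by simp)
  calc ‖KLinner (fun x => f (lam⁻¹ • x)) m2‖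
      ≤ ∫ p : E3, lam ^ 5 * (C * (‖lam • p‖⁻¹ * ((1 + ‖lam • p‖) ^ 4)⁻¹)) := by
        refine norm_integral_le_of_norm_le
          ((((integrable_comp_smul_iff volume _ hlam.ne').2 hB).const_mul C).const_mul _) ?_
        filter_upwards [compl_mem_ae_iff.2 (measure_singleton (0 : E3))] with p hp
        exact norm_KLinner_integrand_comp_inv_smul_le hC hf hlam hm2 hp
    _ = lam ^ 2 * (C * ∫ q : E3, ‖q‖⁻¹ * ((1 + ‖q‖) ^ 4)⁻¹) := by
        rw [integral_const_mul, integral_const_mul,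
          Measure.integral_comp_smul_of_nonneg volume
          (fun q : E3 => ‖q‖⁻¹ * ((1 + ‖q‖) ^ 4)⁻¹) _ (hR := hlam.le), finrank_euclideanSpace_fin,
          smul_eq_mul]
        field_simp

lemma norm_KL_le {ρ : Measure ℝ} (hρ : ρ (Ici 0) < ⊤) {g : E4 → ℂ} {M : ℝ}
    (hg : ∀ m2 ∈ Ici (0 : ℝ), ‖KLinner g m2‖ ≤ M) : ‖KL ρ g‖ ≤ M * ρ.real (Ici 0) :=
  norm_setIntegral_le_of_norm_le_const hρ hg

lemma exists_norm_KLscaled_le (ρ : Measure ℝ) [IsFiniteMeasure ρ] (f : 𝓢(E4, ℂ)) :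
    ∃ K, ∀ lam : ℝ, 0 < lam → ‖KLscaled ρ lam ⇑f‖ ≤ (lam ^ 2)⁻¹ * K := by
  obtain ⟨C, hC, hf⟩ := (𝓕 f).exists_norm_le_mul_inv_one_add_norm_pow 4
  refine ⟨C * (∫ q : E3, ‖q‖⁻¹ * ((1 + ‖q‖) ^ 4)⁻¹) * ρ.real (Ici 0), fun lam hlam => ?_⟩
  have hKL := norm_KL_le (ρ := ρ) (measure_lt_top _ _) fun m2 hm2 =>
    norm_KLinner_comp_inv_smul_le hC hf hlam hm2
  rw [KLscaled, norm_mul, Complex.norm_real, Real.norm_of_nonneg (by positivity)]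
  calc (lam ^ 4)⁻¹ * ‖KL ρ fun x => f (lam⁻¹ • x)‖
      ≤ (lam ^ 4)⁻¹ *
          (lam ^ 2 * (C * ∫ q : E3, ‖q‖⁻¹ * ((1 + ‖q‖) ^ 4)⁻¹) * ρ.real (Ici 0)) := by
        gcongr
    _ = _ := by field_simp

/-- Theorem 3.2, main result: If the spectral measure `ρ` on `[0,∞)` is finite,
then for every real `ω > 2` and every Schwartz `f` on ℝ⁴ we have
`λ^ω W_{ρ,λ}(f) → 0` as `λ → 0⁺`; consequently the Steinmann scaling degree of `W_ρ`
(the infimum of the set of `ω` for which all these limits vanish) is at most `2`, so the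
singularity hypothesis `sd(W_ρ) > 2` fails. -/
theorem kl_scaling_degree_le_two_of_finite (ρ : Measure ℝ) [IsFiniteMeasure ρ] :
    (∀ ω : ℝ, 2 < ω → ∀ f : 𝓢(EuclideanSpace ℝ (Fin 4), ℂ),
      Tendsto (fun lam : ℝ => ((lam ^ ω : ℝ) : ℂ) * KLscaled ρ lam ⇑f)
        (𝓝[>] (0 : ℝ)) (𝓝 0)) ∧
    sInf {ω : ℝ | ∀ f : 𝓢(EuclideanSpace ℝ (Fin 4), ℂ),
        Tendsto (fun lam : ℝ => ((lam ^ ω : ℝ) : ℂ) * KLscaled ρ lam ⇑f)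
          (𝓝[>] (0 : ℝ)) (𝓝 0)} ≤ 2 := by
  have hlim : ∀ ω : ℝ, 2 < ω → ∀ f : 𝓢(E4, ℂ),
      Tendsto (fun lam : ℝ => ((lam ^ ω : ℝ) : ℂ) * KLscaled ρ lam ⇑f) (𝓝[>] 0) (𝓝 0) := by
    intro ω hω f
    obtain ⟨K, hK⟩ := exists_norm_KLscaled_le ρ f
    have hbound : ∀ᶠ lam in 𝓝[>] (0 : ℝ),
        ‖((lam ^ ω : ℝ) : ℂ) * KLscaled ρ lam ⇑f‖ ≤ lam ^ (ω - 2) * K := by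
      filter_upwards [self_mem_nhdsWithin] with lam (hlam : 0 < lam)
      rw [norm_mul, Complex.norm_real, Real.norm_of_nonneg (by positivity),
        Real.rpow_sub hlam, Real.rpow_two, div_eq_mul_inv, mul_assoc]
      gcongr
      exact hK lam hlam
    exact squeeze_zero_norm' hbound (Real.tendsto_rpow_mul_nhdsGT_zero (by linarith) K)
  exact ⟨hlim, Real.sInf_le_of_Ioi_subset zero_le_two hlim⟩
end
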